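/- arXiv:2005.07445 — 5 statements merged into one kernel-verified Lean document; each statement's English description precedes it below -/
import Mathlib

section
/- Let a ≥ b ≥ 0 and c ≥ d ≥ 0. Then max(min(a,d), min(b,c)) ≤ max(min(a,c), min(b,d)). In particular, arranging one vector in non-increasing order and the other in non-decreasing order minimizes max_i min{x_i, y_i} over relabelings: for any two nonnegative vectors x, y : Fin S → ℝ, if x↓ is x sorted non-increasingly and y↑ is y sorted non-decreasingly, then max_i min{x↓_i, y↑_i} ≤ max_i min{x_i, y_i}. -/
/-- Lemma 2: the scalar exchange inequality, and the resulting rearrangement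
statement: sorting `x` non-increasingly and `y` non-decreasingly minimizes
`max_i min{x_i, y_i}` over relabelings. -/
theorem stmt_1 :
    (∀ a b c d : ℝ, 0 ≤ b → b ≤ a → 0 ≤ d → d ≤ c →
      max (min a d) (min b c) ≤ max (min a c) (min b d)) ∧
    (∀ (S : ℕ) (hS : 0 < S) (x y : Fin S → ℝ),
      (∀ i, 0 ≤ x i) → (∀ i, 0 ≤ y i) →
      ∀ σ τ : Equiv.Perm (Fin S),
        Antitone (x ∘ σ) → Monotone (y ∘ τ) →
        (Finset.univ.sup' (Finset.univ_nonempty_iff.mpr ⟨⟨0, hS⟩⟩)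
            fun i => min (x (σ i)) (y (τ i)))
          ≤ Finset.univ.sup' (Finset.univ_nonempty_iff.mpr ⟨⟨0, hS⟩⟩)
            fun i => min (x i) (y i)) := by
  constructor
  · intro a b c d hb hba hd hdc
    apply max_le
    · exact le_max_of_le_left (min_le_min le_rfl hdc)
    · rcases le_total b d with h | h
      · exact le_max_of_le_right (le_min (min_le_left _ _)
          (le_trans (min_le_left _ _) h))
      · exact le_max_of_le_left (le_min (le_trans (min_le_left _ _) hba)
          (min_le_right _ _))
  · intro S hS x y hx hy σ τ hA hM
    apply Finset.sup'_le
    intro i _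
    by_contra hlt
    push_neg at hlt
    set M := Finset.univ.sup' (Finset.univ_nonempty_iff.mpr ⟨⟨0, hS⟩⟩)
        (fun i => min (x i) (y i)) with hMdef
    have hA' : ∀ j, j ≤ i → M < x (σ j) := fun j hj =>
      lt_of_lt_of_le (lt_of_lt_of_le hlt (min_le_left _ _)) (hA hj)
    have hB' : ∀ j, i ≤ j → M < y (τ j) := fun j hj =>
      lt_of_lt_of_le (lt_of_lt_of_le hlt (min_le_right _ _)) (hM hj)
    have hcardA : ((Finset.Iic i).image σ).card = (i : ℕ) + 1 := by
      rw [Finset.card_image_of_injective _ σ.injective, Fin.card_Iic]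
    have hcardB : ((Finset.Ici i).image τ).card = S - (i : ℕ) := by
      rw [Finset.card_image_of_injective _ τ.injective, Fin.card_Ici]
    have hinter : (((Finset.Iic i).image σ) ∩ ((Finset.Ici i).image τ)).Nonempty := by
      rw [← Finset.card_pos]
      have hU : (((Finset.Iic i).image σ) ∪ ((Finset.Ici i).image τ)).card ≤ S := by
        simpa using Finset.card_le_card
          (Finset.subset_univ (((Finset.Iic i).image σ) ∪ ((Finset.Ici i).image τ)))
      have := Finset.card_union_add_card_inter ((Finset.Iic i).image σ)
        ((Finset.Ici i).image τ)
      omega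
    obtain ⟨k, hk⟩ := hinter
    rw [Finset.mem_inter] at hk
    obtain ⟨j1, hj1, hj1k⟩ := Finset.mem_image.mp hk.1
    obtain ⟨j2, hj2, hj2k⟩ := Finset.mem_image.mp hk.2
    have h1 : M < x k := hj1k ▸ hA' j1 (Finset.mem_Iic.mp hj1)
    have h2 : M < y k := hj2k ▸ hB' j2 (Finset.mem_Ici.mp hj2)
    have hle : min (x k) (y k) ≤ M :=
      Finset.le_sup' (fun i => min (x i) (y i)) (Finset.mem_univ k)
    exact absurd hle (not_le.mpr (lt_min h1 h2))
end

section
/- Let P be an irreducible stochastic matrix on state space [S] with stationary distribution μ, such that every nonzero entry of P is at least α for some α ∈ (0,1]. If μ↓ denotes the non-increasing rearrangement of μ, then μ↓_{i+1} ≥ α · μ↓_i for all 1 ≤ i ≤ S−1. -/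
/-- Lemma 3: for an irreducible stochastic matrix whose nonzero entries are all
at least `α`, the non-increasing rearrangement `μ∘σ` of the stationary
distribution satisfies `μ↓_{i+1} ≥ α · μ↓_i`. -/
theorem stmt_3 (S : ℕ) (P : Matrix (Fin S) (Fin S) ℝ)
    (hnonneg : ∀ i j, 0 ≤ P i j) (hrow : ∀ i, ∑ j, P i j = 1)
    (hirr : ∀ i j : Fin S, ∃ n : ℕ, 0 < (P ^ n) i j)
    (α : ℝ) (hα0 : 0 < α) (hα1 : α ≤ 1)
    (hmin : ∀ i j, P i j ≠ 0 → α ≤ P i j)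
    (μ : Fin S → ℝ) (hμ : ∀ i, 0 ≤ μ i) (hsum : ∑ i, μ i = 1)
    (hstat : ∀ j, ∑ i, μ i * P i j = μ j)
    (σ : Equiv.Perm (Fin S)) (hsort : Antitone (μ ∘ σ)) :
    ∀ i : ℕ, ∀ hi : i + 1 < S,
      α * μ (σ ⟨i, Nat.lt_of_succ_lt hi⟩) ≤ μ (σ ⟨i + 1, hi⟩) := by
  intro i hi
  set T : Fin S → Prop := fun b => (σ.symm b : ℕ) ≤ i with hT
  -- there is a transition from T to its complement
  have hexist : ∃ a b, T a ∧ ¬ T b ∧ P a b ≠ 0 := by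
    by_contra hcon
    push_neg at hcon
    have hzero : ∀ n (a b : Fin S), T a → ¬ T b → (P ^ n) a b = 0 := by
      intro n
      induction n with
      | zero =>
        intro a b ha hb
        have hab : a ≠ b := by rintro rfl; exact hb ha
        simp [Matrix.one_apply_ne hab]
      | succ n ih =>
        intro a b ha hb
        rw [pow_succ, Matrix.mul_apply]
        apply Finset.sum_eq_zero
        intro c _
        by_cases hc : T c
        · rw [hcon c b hc hb, mul_zero]
        · rw [ih a c ha hc, zero_mul]
    obtain ⟨n, hn⟩ := hirr (σ ⟨i, Nat.lt_of_succ_lt hi⟩) (σ ⟨i + 1, hi⟩)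
    have hTa : T (σ ⟨i, Nat.lt_of_succ_lt hi⟩) := by simp [hT]
    have hTb : ¬ T (σ ⟨i + 1, hi⟩) := by simp [hT]
    rw [hzero n _ _ hTa hTb] at hn
    exact lt_irrefl 0 hn
  obtain ⟨a, b, ha, hb, hPab⟩ := hexist
  have hPabα : α ≤ P a b := hmin a b hPab
  -- μ a ≥ μ (σ i)
  have h1 : μ (σ ⟨i, Nat.lt_of_succ_lt hi⟩) ≤ μ a := by
    have : (σ.symm a) ≤ ⟨i, Nat.lt_of_succ_lt hi⟩ := by
      exact ha
    have := hsort this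
    simpa using this
  -- μ b ≤ μ (σ (i+1))
  have h2 : μ b ≤ μ (σ ⟨i + 1, hi⟩) := by
    have : (⟨i + 1, hi⟩ : Fin S) ≤ σ.symm b := by
      simp only [hT, not_le] at hb
      exact hb
    have := hsort this
    simpa using this
  -- stationarity bound
  have h3 : μ a * P a b ≤ μ b := by
    rw [← hstat b]
    exact Finset.single_le_sum (f := fun c => μ c * P c b)
      (fun c _ => mul_nonneg (hμ c) (hnonneg c b)) (Finset.mem_univ a)
  calc α * μ (σ ⟨i, Nat.lt_of_succ_lt hi⟩) ≤ α * μ a := by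
        exact mul_le_mul_of_nonneg_left h1 (le_of_lt hα0)
    _ ≤ μ a * P a b := by rw [mul_comm]; exact mul_le_mul_of_nonneg_left hPabα (hμ a)
    _ ≤ μ b := h3
    _ ≤ μ (σ ⟨i + 1, hi⟩) := h2
end

section
/- Under the assumptions that the induced Markov chain is irreducible under both hypotheses, every positive transition probability under H0 is at least min{p,1−p}, and every positive transition probability under H1 is at least min{q,1−q}, the Bayes error probability satisfies P_e ≥ (1/(2S)) · max_{1≤i≤S} min{ min{p,1−p}^{i−1}, min{q,1−q}^{S−i} }. -/
open Real

lemma pow_nonneg_entry {S : ℕ} (P : Matrix (Fin S) (Fin S) ℝ)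
    (hnn : ∀ i j, 0 ≤ P i j) : ∀ (k : ℕ) (i j), 0 ≤ (P ^ k) i j := by
  intro k
  induction k with
  | zero =>
    intro i j
    rw [pow_zero, Matrix.one_apply]
    split <;> norm_num
  | succ k ih =>
    intro i j
    rw [pow_succ, Matrix.mul_apply]
    exact Finset.sum_nonneg fun v _ => mul_nonneg (ih i v) (hnn v j)

lemma pow_entry_lb {S : ℕ} (P : Matrix (Fin S) (Fin S) ℝ) (δ : ℝ) (hδ0 : 0 ≤ δ)
    (hnn : ∀ i j, 0 ≤ P i j) (hmin : ∀ i j, P i j ≠ 0 → δ ≤ P i j) :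
    ∀ (k : ℕ) (i j), 0 < (P ^ k) i j → δ ^ k ≤ (P ^ k) i j := by
  intro k
  induction k with
  | zero =>
    intro i j h
    simp only [pow_zero, Matrix.one_apply] at h ⊢
    by_cases hij : i = j
    · simp [hij]
    · simp [hij] at h
  | succ k ih =>
    intro i j h
    rw [pow_succ, Matrix.mul_apply] at h
    obtain ⟨v, -, hv⟩ := Finset.exists_ne_zero_of_sum_ne_zero (ne_of_gt h)
    have h1 : 0 < (P ^ k) i v * P v j :=
      lt_of_le_of_ne (mul_nonneg (pow_nonneg_entry P hnn k i v) (hnn v j)) (Ne.symm hv)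
    have h2 : 0 < (P ^ k) i v := by
      rcases mul_pos_iff.mp h1 with ⟨a, _⟩ | ⟨_, b⟩
      · exact a
      · exact absurd b (not_lt.mpr (hnn v j))
    have h3 : 0 < P v j := by
      rcases mul_pos_iff.mp h1 with ⟨_, b⟩ | ⟨a, _⟩
      · exact b
      · exact absurd a (not_lt.mpr (pow_nonneg_entry P hnn k i v))
    calc δ ^ (k + 1) = δ ^ k * δ := by rw [pow_succ]
      _ ≤ (P ^ k) i v * P v j :=
          mul_le_mul (ih i v h2) (hmin v j (ne_of_gt h3)) hδ0 h2.le
      _ ≤ ∑ w, (P ^ k) i w * P w j :=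
          Finset.single_le_sum
            (fun w _ => mul_nonneg (pow_nonneg_entry P hnn k i w) (hnn w j))
            (Finset.mem_univ v)
      _ = (P ^ (k + 1)) i j := by rw [pow_succ, Matrix.mul_apply]

lemma stat_pow {S : ℕ} (P : Matrix (Fin S) (Fin S) ℝ) (μ : Fin S → ℝ)
    (hstat : ∀ j, ∑ i, μ i * P i j = μ j) :
    ∀ (k : ℕ) (j), ∑ i, μ i * (P ^ k) i j = μ j := by
  intro k
  induction k with
  | zero =>
    intro j
    simp [Matrix.one_apply]
  | succ k ih =>
    intro j
    have hrw : ∀ i, (P ^ (k + 1)) i j = ∑ v, (P ^ k) i v * P v j := by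
      intro i; rw [pow_succ, Matrix.mul_apply]
    simp_rw [hrw, Finset.mul_sum, ← mul_assoc]
    rw [Finset.sum_comm]
    simp_rw [← Finset.sum_mul, ih]
    exact hstat j

lemma mu_lb {S : ℕ} (P : Matrix (Fin S) (Fin S) ℝ) (μ : Fin S → ℝ) (hμ : ∀ i, 0 ≤ μ i)
    (hnn : ∀ i j, 0 ≤ P i j) (hstat : ∀ j, ∑ i, μ i * P i j = μ j)
    (k : ℕ) (u w : Fin S) : μ u * (P ^ k) u w ≤ μ w := by
  rw [← stat_pow P μ hstat k w]
  exact Finset.single_le_sum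
    (fun i _ => mul_nonneg (hμ i) (pow_nonneg_entry P hnn k i w))
    (Finset.mem_univ u)

lemma reach_card {S : ℕ} (hS : 0 < S) (P : Matrix (Fin S) (Fin S) ℝ)
    (hnn : ∀ i j, 0 ≤ P i j)
    (hirr : ∀ i j : Fin S, ∃ n : ℕ, 0 < (P ^ n) i j) (u : Fin S) :
    ∀ k : ℕ, min (k + 1) S ≤
      (Finset.univ.filter (fun w => ∃ m ≤ k, 0 < (P ^ m) u w)).card := by
  intro k
  induction k with
  | zero =>
    have hu : u ∈ Finset.univ.filter (fun w => ∃ m ≤ 0, 0 < (P ^ m) u w) := by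
      refine Finset.mem_filter.mpr ⟨Finset.mem_univ u, 0, le_refl 0, ?_⟩
      simp [Matrix.one_apply]
    have h1 : 1 ≤ (Finset.univ.filter (fun w => ∃ m ≤ 0, 0 < (P ^ m) u w)).card :=
      Finset.card_pos.mpr ⟨u, hu⟩
    omega
  | succ k ih =>
    set A := Finset.univ.filter (fun w => ∃ m ≤ k, 0 < (P ^ m) u w) with hA_def
    set B := Finset.univ.filter (fun w => ∃ m ≤ k + 1, 0 < (P ^ m) u w) with hB_def
    have hAB : A ⊆ B := by
      intro w hw
      rw [hA_def, Finset.mem_filter] at hw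
      rw [hB_def, Finset.mem_filter]
      obtain ⟨-, m, hm, hpos⟩ := hw
      exact ⟨Finset.mem_univ w, m, by omega, hpos⟩
    by_cases hA : A = Finset.univ
    · have hB : B = Finset.univ := Finset.univ_subset_iff.mp (hA ▸ hAB)
      have : B.card = S := by rw [hB, Finset.card_univ, Fintype.card_fin]
      omega
    · have hne : A ≠ B := by
        intro hEq
        obtain ⟨w, hw⟩ : ∃ w, w ∉ A := by
          by_contra h
          push_neg at h
          exact hA (Finset.eq_univ_iff_forall.mpr h)
        have key : ∀ n, ∀ x, x ∉ A → (P ^ n) u x = 0 := by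
          intro n
          induction n with
          | zero =>
            intro x hx
            rw [pow_zero, Matrix.one_apply, if_neg]
            intro hux
            apply hx
            refine Finset.mem_filter.mpr ⟨Finset.mem_univ x, 0, Nat.zero_le k, ?_⟩
            rw [pow_zero, Matrix.one_apply, if_pos hux]
            norm_num
          | succ n ihn =>
            intro x hx
            rw [pow_succ, Matrix.mul_apply]
            apply Finset.sum_eq_zero
            intro v _
            by_cases hv : v ∈ A
            · by_cases hPvx : P v x = 0
              · rw [hPvx, mul_zero]
              · exfalso
                obtain ⟨m, hm, hpos⟩ := (Finset.mem_filter.mp hv).2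
                have hPvx' : 0 < P v x := lt_of_le_of_ne (hnn v x) (Ne.symm hPvx)
                have hstep : 0 < (P ^ (m + 1)) u x := by
                  rw [pow_succ, Matrix.mul_apply]
                  refine lt_of_lt_of_le (mul_pos hpos hPvx') ?_
                  exact Finset.single_le_sum
                    (fun y _ => mul_nonneg (pow_nonneg_entry P hnn m u y) (hnn y x))
                    (Finset.mem_univ v)
                have hxB : x ∈ B :=
                  Finset.mem_filter.mpr ⟨Finset.mem_univ x, m + 1, by omega, hstep⟩
                rw [← hEq] at hxB
                exact hx hxB
            · rw [ihn v hv, zero_mul]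
        obtain ⟨n, hn⟩ := hirr u w
        rw [key n w hw] at hn
        exact lt_irrefl 0 hn
      have hcard : A.card < B.card :=
        Finset.card_lt_card (Finset.ssubset_iff_subset_ne.mpr ⟨hAB, hne⟩)
      omega

/-- Combining Lemmas 1–3: if the machine induces irreducible stochastic chains
under both hypotheses, with all positive transition probabilities at least
`min{p,1-p}` (under H0) and `min{q,1-q}` (under H1), then the Bayes error
`(1/2) Σ_i min{μ^p_i, μ^q_i}` is at least
`(1/(2S)) max_{1≤i≤S} min{min{p,1-p}^{i-1}, min{q,1-q}^{S-i}}`. -/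
theorem stmt_6 (S : ℕ) (hS : 0 < S) (p q : ℝ)
    (hq0 : 0 < q) (hqp : q < p) (hp1 : p < 1)
    (P0 P1 : Matrix (Fin S) (Fin S) ℝ)
    (h0nonneg : ∀ i j, 0 ≤ P0 i j) (h0row : ∀ i, ∑ j, P0 i j = 1)
    (h1nonneg : ∀ i j, 0 ≤ P1 i j) (h1row : ∀ i, ∑ j, P1 i j = 1)
    (h0irr : ∀ i j : Fin S, ∃ n : ℕ, 0 < (P0 ^ n) i j)
    (h1irr : ∀ i j : Fin S, ∃ n : ℕ, 0 < (P1 ^ n) i j)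
    (h0min : ∀ i j, P0 i j ≠ 0 → min p (1 - p) ≤ P0 i j)
    (h1min : ∀ i j, P1 i j ≠ 0 → min q (1 - q) ≤ P1 i j)
    (μp μq : Fin S → ℝ)
    (hμp : ∀ i, 0 ≤ μp i) (hμq : ∀ i, 0 ≤ μq i)
    (hsp : ∑ i, μp i = 1) (hsq : ∑ i, μq i = 1)
    (hstat0 : ∀ j, ∑ i, μp i * P0 i j = μp j)
    (hstat1 : ∀ j, ∑ i, μq i * P1 i j = μq j) :
    (1 / (2 * S) : ℝ) *
        ((Finset.Icc 1 S).sup'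
          (Finset.nonempty_Icc.mpr hS)
          fun i => min (min p (1 - p) ^ (i - 1)) (min q (1 - q) ^ (S - i)))
      ≤ (1 / 2) * ∑ i, min (μp i) (μq i) := by
  have hp0 : 0 < p := lt_trans hq0 hqp
  have hq1 : q < 1 := lt_trans hqp hp1
  have hδp0 : 0 < min p (1 - p) := lt_min hp0 (by linarith)
  have hδp1 : min p (1 - p) ≤ 1 := le_trans (min_le_left _ _) hp1.le
  have hδq0 : 0 < min q (1 - q) := lt_min hq0 (by linarith)
  have hδq1 : min q (1 - q) ≤ 1 := le_trans (min_le_left _ _) hq1.le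
  have hS' : (0 : ℝ) < S := by exact_mod_cast hS
  haveI : Nonempty (Fin S) := Fin.pos_iff_nonempty.mp hS
  -- find states with large stationary mass
  have hmass : ∀ (μ : Fin S → ℝ), (∑ i, μ i = 1) → ∃ u, (1 : ℝ) / S ≤ μ u := by
    intro μ hsum
    by_contra h
    push_neg at h
    have hlt : ∑ i, μ i < ∑ _i : Fin S, (1 : ℝ) / S :=
      Finset.sum_lt_sum_of_nonempty Finset.univ_nonempty (fun i _ => h i)
    rw [hsum, Finset.sum_const, Finset.card_univ, Fintype.card_fin, nsmul_eq_mul] at hlt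
    rw [mul_one_div, div_self (ne_of_gt hS')] at hlt
    exact lt_irrefl 1 hlt
  obtain ⟨u, hu⟩ := hmass μp hsp
  obtain ⟨v, hv⟩ := hmass μq hsq
  have key : ∀ i ∈ Finset.Icc 1 S,
      min (min p (1 - p) ^ (i - 1)) (min q (1 - q) ^ (S - i))
        ≤ S * ∑ j, min (μp j) (μq j) := by
    intro i hi
    obtain ⟨hi1, hiS⟩ := Finset.mem_Icc.mp hi
    set A := Finset.univ.filter (fun w => ∃ m ≤ i - 1, 0 < (P0 ^ m) u w) with hA_def
    set B := Finset.univ.filter (fun w => ∃ m ≤ S - i, 0 < (P1 ^ m) v w) with hB_def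
    have hcardA : min (i - 1 + 1) S ≤ A.card := reach_card hS P0 h0nonneg h0irr u (i - 1)
    have hcardB : min (S - i + 1) S ≤ B.card := reach_card hS P1 h1nonneg h1irr v (S - i)
    have hUcard : (A ∪ B).card ≤ S := by
      refine le_trans (Finset.card_le_univ _) ?_
      simp
    have hIU := Finset.card_inter_add_card_union A B
    have hinter : (A ∩ B).Nonempty := by
      rw [← Finset.card_pos]
      omega
    obtain ⟨w, hw⟩ := hinter
    obtain ⟨hwA, hwB⟩ := Finset.mem_inter.mp hw
    obtain ⟨m, hm, hpos0⟩ := (Finset.mem_filter.mp hwA).2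
    obtain ⟨m', hm', hpos1⟩ := (Finset.mem_filter.mp hwB).2
    -- lower bound μp w
    have hboundp : (1 : ℝ) / S * min p (1 - p) ^ (i - 1) ≤ μp w := by
      calc (1 : ℝ) / S * min p (1 - p) ^ (i - 1)
          ≤ μp u * min p (1 - p) ^ m :=
            mul_le_mul hu (pow_le_pow_of_le_one hδp0.le hδp1 hm)
              (pow_nonneg hδp0.le _) (hμp u)
        _ ≤ μp u * (P0 ^ m) u w :=
            mul_le_mul_of_nonneg_left
              (pow_entry_lb P0 _ hδp0.le h0nonneg h0min m u w hpos0) (hμp u)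
        _ ≤ μp w := mu_lb P0 μp hμp h0nonneg hstat0 m u w
    have hboundq : (1 : ℝ) / S * min q (1 - q) ^ (S - i) ≤ μq w := by
      calc (1 : ℝ) / S * min q (1 - q) ^ (S - i)
          ≤ μq v * min q (1 - q) ^ m' :=
            mul_le_mul hv (pow_le_pow_of_le_one hδq0.le hδq1 hm')
              (pow_nonneg hδq0.le _) (hμq v)
        _ ≤ μq v * (P1 ^ m') v w :=
            mul_le_mul_of_nonneg_left
              (pow_entry_lb P1 _ hδq0.le h1nonneg h1min m' v w hpos1) (hμq v)
        _ ≤ μq w := mu_lb P1 μq hμq h1nonneg hstat1 m' v w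
    have hp' : min p (1 - p) ^ (i - 1) ≤ S * μp w := by
      have h := mul_le_mul_of_nonneg_left hboundp hS'.le
      rwa [← mul_assoc, mul_one_div, div_self (ne_of_gt hS'), one_mul] at h
    have hq' : min q (1 - q) ^ (S - i) ≤ S * μq w := by
      have h := mul_le_mul_of_nonneg_left hboundq hS'.le
      rwa [← mul_assoc, mul_one_div, div_self (ne_of_gt hS'), one_mul] at h
    calc min (min p (1 - p) ^ (i - 1)) (min q (1 - q) ^ (S - i))
        ≤ min ((S : ℝ) * μp w) ((S : ℝ) * μq w) := min_le_min hp' hq'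
      _ = (S : ℝ) * min (μp w) (μq w) := by
          rw [mul_min_of_nonneg _ _ hS'.le]
      _ ≤ (S : ℝ) * ∑ j, min (μp j) (μq j) := by
          refine mul_le_mul_of_nonneg_left ?_ hS'.le
          exact Finset.single_le_sum
            (fun j _ => le_min (hμp j) (hμq j)) (Finset.mem_univ w)
  have hsup : ((Finset.Icc 1 S).sup'
      (Finset.nonempty_Icc.mpr hS)
      fun i => min (min p (1 - p) ^ (i - 1)) (min q (1 - q) ^ (S - i)))
        ≤ S * ∑ j, min (μp j) (μq j) := Finset.sup'_le _ _ key
  have hc : (0 : ℝ) < 1 / (2 * S) := by positivity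
  calc (1 / (2 * S) : ℝ) *
        ((Finset.Icc 1 S).sup'
          (Finset.nonempty_Icc.mpr hS)
          fun i => min (min p (1 - p) ^ (i - 1)) (min q (1 - q) ^ (S - i)))
      ≤ (1 / (2 * S) : ℝ) * (S * ∑ j, min (μp j) (μq j)) :=
        mul_le_mul_of_nonneg_left hsup hc.le
    _ = (1 / 2) * ∑ i, min (μp i) (μq i) := by
        field_simp
end

section
/- For fixed q ∈ (0,1/2) and p → 1, r(p,q) ≤ d(p,q) for p sufficiently close to 1, and both converge to the common limit −log q; in particular the converse and achievability exponents coincide in this limit. -/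
/-!
With `a = log q`, `b = log (1 - q)`, `c = log p`, `x = log (1 - p)`, all negative for
`1/2 ≤ p < 1` and `0 < q ≤ 1/2`, the exponents read `d = -x a / (x + a)` and
`r = (c b - a x) / (c + x + a + b)`. Clearing the negative denominators, `r ≤ d` becomes
`c b (x + a) + a x (b + c) ≤ 0`, a sum of two nonpositive products. As `p → 1⁻` we have
`c → 0` and `x → -∞`, and dividing numerator and denominator by `x` shows that `r`, and
`d` (the case `c = b = 0`), tend to `-a`.
-/

open Real Filter Topology

noncomputable def dExponent (p q : ℝ) : ℝ :=
  -(logb 2 (min p (1 - p)) * logb 2 (min q (1 - q))) /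
    (logb 2 (min p (1 - p)) + logb 2 (min q (1 - q)))

noncomputable def rExponent (p q : ℝ) : ℝ :=
  (logb 2 p * logb 2 (1 - q) - logb 2 q * logb 2 (1 - p)) /
    (logb 2 (p * (1 - p)) + logb 2 (q * (1 - q)))

lemma sub_div_le_neg_mul_div_of_neg {a b c x : ℝ} (ha : a < 0) (hb : b < 0) (hc : c < 0)
    (hx : x < 0) : (c * b - a * x) / (c + x + (a + b)) ≤ -(x * a) / (x + a) := by
  rw [← neg_div_neg_eq (c * b - a * x), ← neg_div_neg_eq (-(x * a)),
    div_le_div_iff₀ (by linarith) (by linarith)]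
  nlinarith [mul_nonpos_of_nonneg_of_nonpos (mul_pos_of_neg_of_neg hc hb).le (add_neg hx ha).le,
    mul_nonpos_of_nonneg_of_nonpos (mul_pos_of_neg_of_neg ha hx).le (add_neg hb hc).le]

lemma tendsto_sub_div_of_tendsto_atBot {α : Type*} {l : Filter α} {c x : α → ℝ} (a b : ℝ)
    (hc : Tendsto c l (𝓝 0)) (hx : Tendsto x l atBot) :
    Tendsto (fun t => (c t * b - a * x t) / (c t + x t + (a + b))) l (𝓝 (-a)) := by
  have hx_inv : Tendsto (fun t => (x t)⁻¹) l (𝓝 0) := tendsto_inv_atBot_zero.comp hx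
  have hnum : Tendsto (fun t => c t * b * (x t)⁻¹ - a) l (𝓝 (-a)) := by
    simpa using ((hc.mul_const b).mul hx_inv).sub_const a
  have hden : Tendsto (fun t => (c t + (a + b)) * (x t)⁻¹ + 1) l (𝓝 1) := by
    simpa using ((hc.add_const (a + b)).mul hx_inv).add_const 1
  have hlim : Tendsto (fun t => (c t * b * (x t)⁻¹ - a) / ((c t + (a + b)) * (x t)⁻¹ + 1)) l
      (𝓝 (-a)) := by
    have h := hnum.div hden one_ne_zero
    rwa [div_one] at h
  refine hlim.congr' ?_
  filter_upwards [hx.eventually_ne_atBot 0] with t ht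
  rw [← mul_div_mul_right (c t * b - a * x t) _ (inv_ne_zero ht)]
  congr 1
  · field_simp
  · field_simp
    ring

lemma tendsto_logb_nhdsLT_one (b : ℝ) : Tendsto (logb b) (𝓝[<] 1) (𝓝 0) := by
  simpa using (continuousAt_logb (b := b) one_ne_zero).tendsto.mono_left nhdsWithin_le_nhds

lemma tendsto_logb_one_sub_nhdsLT_one {b : ℝ} (hb : 1 < b) :
    Tendsto (fun p => logb b (1 - p)) (𝓝[<] 1) atBot := by
  refine (tendsto_logb_nhdsGT_zero hb).comp ?_
  refine tendsto_nhdsWithin_of_tendsto_nhds_of_eventually_within _ ?_ ?_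
  · have h : Tendsto (fun p : ℝ => 1 - p) (𝓝 1) (𝓝 (1 - 1)) := tendsto_const_nhds.sub tendsto_id
    simpa using h.mono_left nhdsWithin_le_nhds
  · filter_upwards [self_mem_nhdsWithin] with p (hp : p < 1)
    exact sub_pos.2 hp

lemma dExponent_of_half_le {p q : ℝ} (hp : 1 / 2 ≤ p) (hq : q ≤ 1 / 2) :
    dExponent p q = -(logb 2 (1 - p) * logb 2 q) / (logb 2 (1 - p) + logb 2 q) := by
  rw [dExponent, min_eq_right (by linarith), min_eq_left (by linarith)]

lemma rExponent_eq {p q : ℝ} (hp0 : 0 < p) (hp1 : p < 1) (hq0 : 0 < q) (hq1 : q < 1) :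
    rExponent p q = (logb 2 p * logb 2 (1 - q) - logb 2 q * logb 2 (1 - p)) /
      (logb 2 p + logb 2 (1 - p) + (logb 2 q + logb 2 (1 - q))) := by
  rw [rExponent, logb_mul hp0.ne' (sub_pos.2 hp1).ne', logb_mul hq0.ne' (sub_pos.2 hq1).ne']

lemma rExponent_le_dExponent {p q : ℝ} (hp : 1 / 2 ≤ p) (hp1 : p < 1) (hq0 : 0 < q)
    (hq : q ≤ 1 / 2) : rExponent p q ≤ dExponent p q := by
  rw [rExponent_eq (by linarith) hp1 hq0 (by linarith), dExponent_of_half_le hp hq]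
  exact sub_div_le_neg_mul_div_of_neg (logb_neg one_lt_two hq0 (by linarith))
    (logb_neg one_lt_two (by linarith) (by linarith)) (logb_neg one_lt_two (by linarith) hp1)
    (logb_neg one_lt_two (by linarith) (by linarith))

lemma tendsto_dExponent {q : ℝ} (hq : q ≤ 1 / 2) :
    Tendsto (fun p => dExponent p q) (𝓝[<] 1) (𝓝 (-logb 2 q)) := by
  refine (tendsto_sub_div_of_tendsto_atBot (logb 2 q) 0 tendsto_const_nhds
    (tendsto_logb_one_sub_nhdsLT_one one_lt_two)).congr' ?_
  filter_upwards [Ioo_mem_nhdsLT (by norm_num : (1 / 2 : ℝ) < 1)] with p hp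
  rw [dExponent_of_half_le hp.1.le hq]
  ring_nf

lemma tendsto_rExponent {q : ℝ} (hq0 : 0 < q) (hq1 : q < 1) :
    Tendsto (fun p => rExponent p q) (𝓝[<] 1) (𝓝 (-logb 2 q)) := by
  refine (tendsto_sub_div_of_tendsto_atBot (logb 2 q) (logb 2 (1 - q))
    (tendsto_logb_nhdsLT_one 2) (tendsto_logb_one_sub_nhdsLT_one one_lt_two)).congr' ?_
  filter_upwards [Ioo_mem_nhdsLT (by norm_num : (0 : ℝ) < 1)] with p hp
  rw [rExponent_eq hp.1 hp.2 hq0 hq1]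

/-- Corollary 1 (tightness as `p → 1`): for fixed `q ∈ (0,1/2)`,
`r(p,q) ≤ d(p,q)` for `p` sufficiently close to `1`, and both exponents
converge to the common limit `-log q` (base-2 logs). -/
theorem stmt_11 (q : ℝ) (hq0 : 0 < q) (hq : q < 1 / 2) :
    (∀ᶠ p : ℝ in nhdsWithin 1 (Set.Iio 1),
        (logb 2 p * logb 2 (1 - q) - logb 2 q * logb 2 (1 - p)) /
            (logb 2 (p * (1 - p)) + logb 2 (q * (1 - q)))
          ≤ -(logb 2 (min p (1 - p)) * logb 2 (min q (1 - q))) /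
            (logb 2 (min p (1 - p)) + logb 2 (min q (1 - q)))) ∧
    Tendsto (fun p : ℝ =>
        -(logb 2 (min p (1 - p)) * logb 2 (min q (1 - q))) /
          (logb 2 (min p (1 - p)) + logb 2 (min q (1 - q))))
      (nhdsWithin 1 (Set.Iio 1)) (nhds (-(logb 2 q))) ∧
    Tendsto (fun p : ℝ =>
        (logb 2 p * logb 2 (1 - q) - logb 2 q * logb 2 (1 - p)) /
          (logb 2 (p * (1 - p)) + logb 2 (q * (1 - q))))
      (nhdsWithin 1 (Set.Iio 1)) (nhds (-(logb 2 q))) := by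
  refine ⟨?_, tendsto_dExponent hq.le, tendsto_rExponent hq0 (by linarith)⟩
  filter_upwards [Ioo_mem_nhdsLT (by norm_num : (1 / 2 : ℝ) < 1)] with p hp
  exact rExponent_le_dExponent hp.1.le hp.2 hq0 hq.le
end

section
/- In a finite directed graph on vertex set [S] with designated vertices s, 1, S, suppose there exists at least one simple path from s to 1 and at least one simple path from s to S. Then there exists a vertex v such that the sum of the lengths of some path from v to 1 and some path from v to S is at most S. -/
/-- `l` is a walk from `u` to `v` in the directed graph `A`: consecutive
vertices are joined by edges, and the list starts at `u` and ends at `v`.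
Its number of edges is `l.length - 1`. -/
def IsWalk {S : ℕ} (A : Fin S → Fin S → Prop) (u v : Fin S) (l : List (Fin S)) : Prop :=
  l.Chain' A ∧ l.head? = some u ∧ l.getLast? = some v

/-- If some element of `l` lies in `L`, there is a suffix of `l` whose head
lies in `L` and whose tail avoids `L`. -/
lemma exists_last_common_suffix {α : Type*} (L : List α) :
    ∀ l : List α, (∃ x ∈ l, x ∈ L) →
      ∃ v t, (v :: t) <:+ l ∧ v ∈ L ∧ ∀ y ∈ t, y ∉ L := by
  intro l
  induction l with
  | nil => simp
  | cons x xs ih =>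
    intro h
    by_cases hx : ∃ y ∈ xs, y ∈ L
    · obtain ⟨v, t, hs, hv, ht⟩ := ih hx
      exact ⟨v, t, hs.trans (List.suffix_cons x xs), hv, ht⟩
    · push_neg at hx
      obtain ⟨y, hy, hyL⟩ := h
      have hxL : x ∈ L := by
        rcases List.mem_cons.1 hy with rfl | h'
        · exact hyL
        · exact absurd hyL (hx y h')
      exact ⟨x, xs, List.suffix_refl _, hxL, hx⟩

/-- Graph-theoretic core of Lemma 4: if there are simple paths from `s` to `t₁`
and from `s` to `t₂` in a digraph on `S` vertices, then some vertex `v` admits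
paths to `t₁` and to `t₂` of total length (number of edges) at most `S`. -/
theorem stmt_13 (S : ℕ) (A : Fin S → Fin S → Prop) (s t₁ t₂ : Fin S)
    (h₁ : ∃ l : List (Fin S), IsWalk A s t₁ l ∧ l.Nodup)
    (h₂ : ∃ l : List (Fin S), IsWalk A s t₂ l ∧ l.Nodup) :
    ∃ (v : Fin S) (l₁ l₂ : List (Fin S)),
      IsWalk A v t₁ l₁ ∧ IsWalk A v t₂ l₂ ∧
      (l₁.length - 1) + (l₂.length - 1) ≤ S := by
  obtain ⟨a, ⟨hac, hah, hal⟩, hand⟩ := h₁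
  obtain ⟨b, ⟨hbc, hbh, hbl⟩, hbnd⟩ := h₂
  have hsa : s ∈ a := List.mem_of_mem_head? (by rw [hah]; simp)
  have hsb : s ∈ b := List.mem_of_mem_head? (by rw [hbh]; simp)
  obtain ⟨v, t, hsuf, hvb, ht⟩ := exists_last_common_suffix b a ⟨s, hsa, hsb⟩
  -- suffix of b starting at v
  obtain ⟨p, q, rfl⟩ := List.append_of_mem hvb
  refine ⟨v, v :: t, v :: q, ⟨hac.suffix hsuf, rfl, ?_⟩,
    ⟨hbc.suffix ⟨p, rfl⟩, rfl, ?_⟩, ?_⟩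
  · obtain ⟨pa, rfl⟩ := hsuf
    rwa [List.getLast?_append_of_ne_nil pa (by simp)] at hal
  · rwa [List.getLast?_append_cons] at hbl
  · -- counting
    have htq : (t ++ (v :: q)).Nodup := by
      have htnd : t.Nodup := (hand.sublist (hsuf.sublist)).of_cons
      have hqnd : (v :: q).Nodup := hbnd.sublist (List.suffix_append p _).sublist
      refine List.Nodup.append htnd hqnd ?_
      intro y hyt hyq
      exact ht y hyt (List.mem_append_right p hyq)
    have hcard : (t ++ (v :: q)).length ≤ S := by
      simpa using htq.length_le_card
    simp only [List.length_append, List.length_cons] at hcard ⊢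
    omega
end
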